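/- arXiv:2603.07623 — 4 statements merged into one kernel-verified Lean document; each statement's English description precedes it below -/
import Mathlib

section
/- Let M be a set with at least three elements. Define A₁ = { (a,b,c,d) ∈ M⁴ : |{a,b,c}| ≤ 2 ∨ b = d }, A₂ = { (a,b,c,d) ∈ M⁴ : |{b,c,d}| ≤ 2 ∨ a = c }, and A₃ = { (a,b,c,d) ∈ M⁴ : a = c ∨ (b = c ∧ c = d) ∨ (b ≠ c ∧ c ≠ d) }. Then { (a,b,c,d) ∈ M⁴ : a = c ∨ b = d } = A₁ ∩ A₂ ∩ A₃. -/
lemma ncard_triple_le_two {M : Type*} {x y z : M} :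
    ({x, y, z} : Set M).ncard ≤ 2 ↔ x = y ∨ x = z ∨ y = z := by
  constructor
  · intro h
    by_contra hc
    push_neg at hc
    obtain ⟨h1, h2, h3⟩ := hc
    have : ({x, y, z} : Set M).ncard = 3 :=
      Set.ncard_eq_three.2 ⟨x, y, z, h1, h2, h3, rfl⟩
    omega
  · rintro (rfl | rfl | rfl)
    · have : ({x, x, z} : Set M) = {x, z} := by
        simp [Set.insert_comm, Set.insert_idem]
      rw [this]
      exact (Set.ncard_insert_le _ _).trans (by simp)
    · have : ({x, y, x} : Set M) = {x, y} := by
        ext t; simp; tauto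
      rw [this]
      exact (Set.ncard_insert_le _ _).trans (by simp)
    · have : ({x, y, y} : Set M) = {x, y} := by simp
      rw [this]
      exact (Set.ncard_insert_le _ _).trans (by simp)

/-- `X = {(a,b,c,d) : a = c ∨ b = d}` equals `A₁ ∩ A₂ ∩ A₃` when `M` has at
least three elements. -/
theorem stmt_13 (M : Type*) (hM : ∃ a b c : M, a ≠ b ∧ a ≠ c ∧ b ≠ c)
    (A₁ A₂ A₃ : Set (M × M × M × M))
    (hA₁ : A₁ = {q : M × M × M × M |
      ({q.1, q.2.1, q.2.2.1} : Set M).ncard ≤ 2 ∨ q.2.1 = q.2.2.2})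
    (hA₂ : A₂ = {q : M × M × M × M |
      ({q.2.1, q.2.2.1, q.2.2.2} : Set M).ncard ≤ 2 ∨ q.1 = q.2.2.1})
    (hA₃ : A₃ = {q : M × M × M × M |
      q.1 = q.2.2.1 ∨ (q.2.1 = q.2.2.1 ∧ q.2.2.1 = q.2.2.2)
        ∨ (q.2.1 ≠ q.2.2.1 ∧ q.2.2.1 ≠ q.2.2.2)}) :
    {q : M × M × M × M | q.1 = q.2.2.1 ∨ q.2.1 = q.2.2.2} = A₁ ∩ A₂ ∩ A₃ := by
  subst hA₁ hA₂ hA₃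
  ext ⟨a, b, c, d⟩
  simp only [Set.mem_setOf_eq, Set.mem_inter_iff, ncard_triple_le_two]
  constructor
  · rintro (rfl | rfl)
    · refine ⟨⟨Or.inl (Or.inr (Or.inl rfl)), Or.inr rfl⟩, Or.inl rfl⟩
    · refine ⟨⟨Or.inr rfl, Or.inl (Or.inr (Or.inl rfl))⟩, ?_⟩
      by_cases h : b = c
      · exact Or.inr (Or.inl ⟨h, h.symm⟩)
      · exact Or.inr (Or.inr ⟨h, fun hc => h (hc.symm)⟩)
  · rintro ⟨⟨h1, h2⟩, (rfl | ⟨rfl, rfl⟩ | ⟨hbc, hcd⟩)⟩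
    · exact Or.inl rfl
    · exact Or.inr rfl
    · rcases h2 with (hbc' | hbd | hcd') | rfl
      · exact absurd hbc' hbc
      · exact Or.inr hbd
      · exact absurd hcd' hcd
      · exact Or.inl rfl
end

section
/- Let α be a set, f, φ : α → ℝ, and m, r, s, ε ∈ ℝ with ε > 0. Suppose: A = { a ∈ α : f(a) = m } is nonempty; f(a) ≥ m for all a ∈ α; for all a ∈ α, if f(a) ≠ m then f(a) ≥ m + ε; and r ≤ φ(a) ≤ s for all a ∈ α. Then sInf{ φ(a) : a ∈ A } = sInf{ ((s − r)/ε + 1)·(f(a) − m) + φ(a) : a ∈ α }. -/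
/-!
On the argmin set `A` the penalty term vanishes, so every value of `φ` on `A` is a penalised
value. Off `A` the gap `f a - m ≥ ε` makes the penalty at least `s - r + ε`, so the penalised
value exceeds `s`, hence exceeds `φ` at any point of `A`. Thus each of the two sets is bounded
below pointwise by the other, and they have the same infimum.
-/

theorem le_penalized_of_gap {s r ε m y φa : ℝ} (hε : 0 < ε) (hrs : r ≤ s) (hr : r ≤ φa)
    (hgap : m + ε ≤ y) : s ≤ ((s - r) / ε + 1) * (y - m) + φa := by
  have hc : 0 ≤ (s - r) / ε + 1 := by positivity [sub_nonneg.2 hrs]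
  have hcε : ((s - r) / ε + 1) * ε = s - r + ε := by field_simp
  linarith [mul_le_mul_of_nonneg_left (le_sub_iff_add_le'.2 hgap) hc]

theorem stmt_16_general (α : Type*) (f φ : α → ℝ) (m r s ε : ℝ) (hε : 0 < ε)
    (A : Set α) (hA : A = {a : α | f a = m}) (hAne : A.Nonempty)
    (hgap : ∀ a : α, f a ≠ m → m + ε ≤ f a)
    (hbd : ∀ a : α, r ≤ φ a ∧ φ a ≤ s) :
    sInf (φ '' A) =
      sInf (Set.range fun a : α => ((s - r) / ε + 1) * (f a - m) + φ a) := by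
  subst hA
  obtain ⟨a₀, ha₀⟩ := hAne
  apply csInf_eq_csInf_of_forall_exists_le
  · rintro _ ⟨a, ha : f a = m, rfl⟩
    exact ⟨_, ⟨a, rfl⟩, by simp [ha]⟩
  · rintro _ ⟨a, rfl⟩
    by_cases ha : f a = m
    · exact ⟨φ a, ⟨a, ha, rfl⟩, by simp [ha]⟩
    · refine ⟨φ a₀, ⟨a₀, ha₀, rfl⟩, (hbd a₀).2.trans ?_⟩
      exact le_penalized_of_gap hε ((hbd a₀).1.trans (hbd a₀).2) (hbd a).1 (hgap a ha)

/-- Quantification over the argmin set `A = {a : f a = m}` can be rewritten as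
an unrestricted infimum with a penalty term. -/
theorem stmt_16 (α : Type*) (f φ : α → ℝ) (m r s ε : ℝ) (hε : 0 < ε)
    (A : Set α) (hA : A = {a : α | f a = m}) (hAne : A.Nonempty)
    (hmin : ∀ a : α, m ≤ f a)
    (hgap : ∀ a : α, f a ≠ m → m + ε ≤ f a)
    (hbd : ∀ a : α, r ≤ φ a ∧ φ a ≤ s) :
    sInf (φ '' A) =
      sInf (Set.range fun a : α => ((s - r) / ε + 1) * (f a - m) + φ a) :=
  stmt_16_general α f φ m r s ε hε A hA hAne hgap hbd
end

section
/- Let α be a set, f, φ : α → ℝ, and m, r, s, ε ∈ ℝ with ε > 0. Suppose: A = { a ∈ α : f(a) = m } is nonempty; f(a) ≥ m for all a ∈ α; for all a ∈ α, if f(a) ≠ m then f(a) ≥ m + ε; and r ≤ φ(a) ≤ s for all a ∈ α. Then sSup{ φ(a) : a ∈ A } = sSup{ −((s − r)/ε + 1)·(f(a) − m) + φ(a) : a ∈ α }. -/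
/-- Quantification over the argmin set `A = {a : f a = m}` can be rewritten as
an unrestricted supremum with a penalty term. -/
theorem stmt_17 (α : Type*) (f φ : α → ℝ) (m r s ε : ℝ) (hε : 0 < ε)
    (A : Set α) (hA : A = {a : α | f a = m}) (hAne : A.Nonempty)
    (hmin : ∀ a : α, m ≤ f a)
    (hgap : ∀ a : α, f a ≠ m → m + ε ≤ f a)
    (hbd : ∀ a : α, r ≤ φ a ∧ φ a ≤ s) :
    sSup (φ '' A) =
      sSup (Set.range fun a : α => -(((s - r) / ε + 1) * (f a - m)) + φ a) := by
  set C := (s - r) / ε + 1 with hC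
  set g : α → ℝ := fun a => -(C * (f a - m)) + φ a with hg
  obtain ⟨a₀, ha₀⟩ := hAne
  have ha₀m : f a₀ = m := by rw [hA] at ha₀; exact ha₀
  have hrs : r ≤ s := le_trans (hbd a₀).1 (hbd a₀).2
  have hCpos : 0 < C := by
    have : 0 ≤ (s - r) / ε := div_nonneg (by linarith) hε.le
    simp [hC]; linarith
  have hgub : ∀ a, g a ≤ s := fun a => by
    have h1 : 0 ≤ C * (f a - m) := mul_nonneg hCpos.le (by linarith [hmin a])
    have := (hbd a).2
    simp only [hg]; linarith
  have hbdd : BddAbove (Set.range g) := ⟨s, by rintro x ⟨a, rfl⟩; exact hgub a⟩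
  have hbddA : BddAbove (φ '' A) := ⟨s, by rintro x ⟨a, _, rfl⟩; exact (hbd a).2⟩
  apply le_antisymm
  · apply csSup_le_csSup hbdd
    · exact ⟨φ a₀, ⟨a₀, ha₀, rfl⟩⟩
    · rintro x ⟨a, ha, rfl⟩
      refine ⟨a, ?_⟩
      rw [hA] at ha
      simp only [hg]
      have : f a = m := ha
      rw [this]; ring
  · refine csSup_le ⟨g a₀, a₀, rfl⟩ ?_
    rintro x ⟨a, rfl⟩
    have hlb : r ≤ sSup (φ '' A) := le_trans (hbd a₀).1 (le_csSup hbddA ⟨a₀, ha₀, rfl⟩)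
    by_cases h : f a = m
    · have : g a = φ a := by simp [hg, h]
      rw [this]
      exact le_csSup hbddA ⟨a, by rw [hA]; exact h, rfl⟩
    · have h1 : m + ε ≤ f a := hgap a h
      have h2 : C * ε ≤ C * (f a - m) := mul_le_mul_of_nonneg_left (by linarith) hCpos.le
      have h3 : C * ε = s - r + ε := by
        rw [hC]; field_simp
      have := (hbd a).2
      have : g a ≤ r - ε := by simp only [hg]; linarith
      linarith
end

section
/- Let α be a set, f, g : α → ℝ, and m, r, s, ε ∈ ℝ with ε > 0. Suppose: B = { x ∈ α : g(x) = m } is nonempty; g(x) ≥ m for all x ∈ α; for all x ∈ α, if g(x) ≠ m then g(x) ≥ m + ε; and r ≤ f(x) ≤ s for all x ∈ α. Define h : α → ℝ by h(x) = ((s − r)/ε + 1)·(g(x) − m) + f(x). Then the argmin of h equals the argmin of f restricted to B; that is, { x ∈ α : ∀ y ∈ α, h(x) ≤ h(y) } = { x ∈ B : ∀ y ∈ B, f(x) ≤ f(y) }. -/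
/-- The argmin of the penalized function `h` equals the argmin of `f`
restricted to `B = {x : g x = m}`. -/
theorem stmt_19 (α : Type*) (f g : α → ℝ) (m r s ε : ℝ) (hε : 0 < ε)
    (B : Set α) (hB : B = {x : α | g x = m}) (hBne : B.Nonempty)
    (hmin : ∀ x : α, m ≤ g x)
    (hgap : ∀ x : α, g x ≠ m → m + ε ≤ g x)
    (hbd : ∀ x : α, r ≤ f x ∧ f x ≤ s)
    (h : α → ℝ) (hh : ∀ x : α, h x = ((s - r) / ε + 1) * (g x - m) + f x) :
    {x : α | ∀ y : α, h x ≤ h y} = {x : α | x ∈ B ∧ ∀ y ∈ B, f x ≤ f y} := by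
  obtain ⟨b, hb⟩ := hBne
  have hrs : r ≤ s := le_trans (hbd b).1 (hbd b).2
  have hmem : ∀ x, x ∈ B ↔ g x = m := by
    intro x; rw [hB]; rfl
  have hhB : ∀ x, x ∈ B → h x = f x := by
    intro x hx
    rw [hh, (hmem x).1 hx]
    ring
  have hout : ∀ x, x ∉ B → s + ε ≤ h x := by
    intro x hx
    have hg : m + ε ≤ g x := hgap x (fun e => hx ((hmem x).2 e))
    have hC : ((s - r) / ε + 1) * ε = s - r + ε := by
      field_simp
    have h1 : ((s - r) / ε + 1) * ε ≤ ((s - r) / ε + 1) * (g x - m) := by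
      apply mul_le_mul_of_nonneg_left (by linarith)
      have : 0 ≤ (s - r) / ε := div_nonneg (by linarith) hε.le
      linarith
    rw [hh]
    have := (hbd x).1
    rw [hC] at h1
    linarith
  ext x
  simp only [Set.mem_setOf_eq]
  constructor
  · intro hx
    have hxB : x ∈ B := by
      by_contra hxn
      have h1 := hout x hxn
      have h2 := hx b
      rw [hhB b hb] at h2
      have := (hbd b).2
      linarith
    refine ⟨hxB, fun y hy => ?_⟩
    have := hx y
    rwa [hhB x hxB, hhB y hy] at this
  · rintro ⟨hxB, hmin'⟩ y
    rw [hhB x hxB]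
    by_cases hyB : y ∈ B
    · rw [hhB y hyB]; exact hmin' y hyB
    · have := hout y hyB
      have := (hbd x).2
      linarith
end
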